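/- Let q ≥ 2, let y ∈ ℝ^q satisfy y_1 + … + y_q = 0, and let w ∈ ℝ^q be arbitrary. Then there exists a permutation σ of {1,…,q} such that Σ_{i=1}^q w_i·y_{σ(i)} ≥ 0. Consequently, for every nonzero y ∈ M̃_≤^{q−1}, no open spherical cap of normalized surface area greater than 1/2 on the sphere {v : Σv_i = 0, ‖v‖ = ‖y‖} is disjoint from the set of permutations of y, i.e., the largest empty cap discrepancy of Π(y) is at most 1/2. -/

import Mathlib

/-!
Averaging over all permutations: `∑_σ y_{σ(i)}` does not depend on `i`, hence vanishes, so
`∑_σ ∑_i w_i y_{σ(i)} = 0` and some term is nonnegative. A cap `{v : ⟪v, w⟫ > ρ²t}` missing every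
permutation of `y` therefore has `ρ²t ≥ 0`. The reflection in `w^⊥` fixes `(1,…,1)`, so it
preserves `μ`, and it maps the cap onto the disjoint cap `{⟪v, w⟫ < -ρ²t}`; two disjoint sets of
equal measure in a probability space have measure at most `1/2`.
-/

open MeasureTheory

theorem sum_perm_apply_eq_zero {ι M : Type*} [Fintype ι] [DecidableEq ι]
    [AddCommMonoid M] [IsAddTorsionFree M]
    (y : ι → M) (hy : ∑ i, y i = 0) (i : ι) : ∑ σ : Equiv.Perm ι, y (σ i) = 0 := by
  have hconst (j : ι) : ∑ σ : Equiv.Perm ι, y (σ j) = ∑ σ : Equiv.Perm ι, y (σ i) :=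
    Fintype.sum_equiv (Equiv.mulRight (Equiv.swap i j)) _ _ fun σ => by simp
  have htotal : ∑ j, ∑ σ : Equiv.Perm ι, y (σ j) = 0 := by
    rw [Finset.sum_comm]
    exact Finset.sum_eq_zero fun σ _ => (Equiv.sum_comp σ y).trans hy
  have : Nonempty ι := ⟨i⟩
  simp only [hconst, Finset.sum_const, Finset.card_univ] at htotal
  exact (nsmul_eq_zero_iff_right Fintype.card_ne_zero).mp htotal

theorem exists_perm_sum_mul_nonneg {ι R : Type*} [Fintype ι] [DecidableEq ι]
    [Ring R] [LinearOrder R] [IsStrictOrderedRing R]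
    (w y : ι → R) (hy : ∑ i, y i = 0) :
    ∃ σ : Equiv.Perm ι, 0 ≤ ∑ i, w i * y (σ i) := by
  have hsum : ∑ σ : Equiv.Perm ι, ∑ i, w i * y (σ i) = ∑ _σ : Equiv.Perm ι, (0 : R) := by
    rw [Finset.sum_comm, Finset.sum_const_zero]
    simp [← Finset.mul_sum, sum_perm_apply_eq_zero y hy]
  obtain ⟨σ, -, hσ⟩ := Finset.exists_le_of_sum_le Finset.univ_nonempty hsum.ge
  exact ⟨σ, hσ⟩

theorem inner_reflection_orthogonal_singleton_left {E : Type*} [NormedAddCommGroup E]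
    [InnerProductSpace ℝ E] (w v : E) :
    inner ℝ (Submodule.reflection (ℝ ∙ w)ᗮ v) w = -inner ℝ v w := by
  rw [← LinearIsometryEquiv.inner_map_map (Submodule.reflection (ℝ ∙ w)ᗮ),
    Submodule.reflection_orthogonalComplement_singleton_eq_neg, inner_neg_right,
    Submodule.reflection_reflection]

theorem measure_setOf_lt_inner_le_half {E : Type*} [NormedAddCommGroup E]
    [InnerProductSpace ℝ E] [MeasurableSpace E] [BorelSpace E]
    (μ : Measure E) [IsProbabilityMeasure μ] (w : E)
    (hμ : μ.map (Submodule.reflection (ℝ ∙ w)ᗮ) = μ) {c : ℝ} (hc : 0 ≤ c) :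
    μ {v | c < inner ℝ v w} ≤ 1 / 2 := by
  set A := {v | c < inner ℝ v w}
  set B := {v : E | inner ℝ v w < -c}
  have hcont : Continuous fun v : E => inner ℝ v w := by fun_prop
  have hA : MeasurableSet A := (isOpen_lt continuous_const hcont).measurableSet
  have hB : MeasurableSet B := (isOpen_lt hcont continuous_const).measurableSet
  have hpre : Submodule.reflection (ℝ ∙ w)ᗮ ⁻¹' A = B := by
    ext v
    simp only [A, B, Set.mem_preimage, Set.mem_ofPred_eq,
      inner_reflection_orthogonal_singleton_left]
    constructor <;> intro h <;> linarith
  have hAB : μ A = μ B := by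
    rw [← hpre, ← Measure.map_apply (LinearIsometryEquiv.continuous _).measurable hA, hμ]
  have hdisj : Disjoint A B :=
    Set.disjoint_left.mpr fun v (hv : c < _) (hv' : _ < -c) => by linarith
  have h2 : 2 * μ A ≤ 1 := by
    calc 2 * μ A = μ (A ∪ B) := by rw [measure_union hdisj hB, ← hAB, two_mul]
      _ ≤ 1 := prob_le_one
  rwa [ENNReal.le_div_iff_mul_le (by simp) (by simp), mul_comm]

theorem stmt4 (q : ℕ) :
    (∀ y w : EuclideanSpace ℝ (Fin q), (∑ i, y i = 0) →
      ∃ σ : Equiv.Perm (Fin q), 0 ≤ ∑ i, w i * y (σ i)) ∧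
    (∀ y : EuclideanSpace ℝ (Fin q), y ≠ 0 →
      (∀ i j : Fin q, i ≤ j → y i ≤ y j) → (∑ i, y i = 0) →
      ∀ μ : Measure (EuclideanSpace ℝ (Fin q)), IsProbabilityMeasure μ →
        μ {v | (∑ i, v i = 0) ∧ ‖v‖ = ‖y‖} = 1 →
        (∀ f : EuclideanSpace ℝ (Fin q) ≃ₗᵢ[ℝ] EuclideanSpace ℝ (Fin q),
          f ((WithLp.toLp 2 (fun _ => 1) : EuclideanSpace ℝ (Fin q))) = (WithLp.toLp 2 (fun _ => 1) : EuclideanSpace ℝ (Fin q)) →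
          μ.map f = μ) →
        ∀ w : EuclideanSpace ℝ (Fin q), (∑ i, w i = 0) → ‖w‖ = ‖y‖ →
          ∀ t : ℝ, -1 ≤ t → t < 1 →
            (∀ σ : Equiv.Perm (Fin q), ¬ (‖y‖ ^ 2 * t < ∑ i, y (σ i) * w i)) →
            μ {v | ((∑ i, v i = 0) ∧ ‖v‖ = ‖y‖) ∧ ‖y‖ ^ 2 * t < ∑ i, v i * w i} ≤ 1 / 2) := by
  have sum_mul_eq_inner (v w : EuclideanSpace ℝ (Fin q)) : ∑ i, v i * w i = inner ℝ v w := by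
    simp [PiLp.inner_apply, mul_comm]
  refine ⟨fun y w hy => exists_perm_sum_mul_nonneg w y hy, ?_⟩
  intro y _ _ hy μ _ _ hinv w hw _ t _ _ hcap
  obtain ⟨σ, hσ⟩ := exists_perm_sum_mul_nonneg w y hy
  have hc : 0 ≤ ‖y‖ ^ 2 * t := by
    have hle := not_lt.mp (hcap σ)
    simp only [mul_comm (y _)] at hle
    exact hσ.trans hle
  have hones :
      Submodule.reflection (ℝ ∙ w)ᗮ (WithLp.toLp 2 fun _ => 1) = WithLp.toLp 2 fun _ => 1 := by
    refine Submodule.reflection_mem_subspace_eq_self ?_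
    rw [Submodule.mem_orthogonal_singleton_iff_inner_right, ← sum_mul_eq_inner]
    simpa using hw
  calc _ ≤ μ {v | ‖y‖ ^ 2 * t < inner ℝ v w} :=
        measure_mono fun v hv => show _ < _ from sum_mul_eq_inner v w ▸ hv.2
    _ ≤ 1 / 2 := measure_setOf_lt_inner_le_half μ w (hinv _ hones) hc
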